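/- arXiv:0902.2206 — 3 statements merged into one kernel-verified Lean document; each statement's English description precedes it below -/
import Mathlib

section
/- The hashed inner product is an unbiased estimator of the true inner product: for any vectors x, x' in R^d, the expectation over uniformly random hash function h : {1,...,d} → {1,...,m} and uniformly random sign function ξ : {1,...,d} → {±1} (with h and ξ independent and each coordinate-wise independent) of ⟨x,x'⟩_φ = ∑_{i,j} ξ(i)ξ(j) x_i x'_j · [h(i)=h(j)] equals ⟨x,x'⟩ = ∑_i x_i x'_i. -/
open Finset

/-- Sign associated to a boolean. -/
noncomputable def sgn (b : Bool) : ℝ := if b then 1 else -1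

/-- Hashed inner product for fixed hash `h` and sign `ξ`. -/
noncomputable def hip {d m : ℕ} (h : Fin d → Fin m) (ξ : Fin d → Bool)
    (x x' : Fin d → ℝ) : ℝ :=
  ∑ k : Fin m,
    (∑ j ∈ Finset.univ.filter (fun j => h j = k), sgn (ξ j) * x j) *
    (∑ j ∈ Finset.univ.filter (fun j => h j = k), sgn (ξ j) * x' j)

/-- Expectation over the uniformly random pair `(h, ξ)`. -/
noncomputable def hashExp (d m : ℕ) (f : (Fin d → Fin m) → (Fin d → Bool) → ℝ) : ℝ :=
  (∑ h : Fin d → Fin m, ∑ ξ : Fin d → Bool, f h ξ) / ((m : ℝ) ^ d * 2 ^ d)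

/-!
Expanding the product of fibre sums, the hashed inner product is
`∑ i j, [h i = h j] ξ(i) ξ(j) x i x' j`. For `i ≠ j` the sign correlation `∑_ξ ξ(i) ξ(j)`
vanishes, because flipping `ξ i` negates it, so averaging over the signs alone already leaves
only the diagonal terms `x i x' i`, whatever the hash function is.
-/

lemma sgn_mul_self (b : Bool) : sgn b * sgn b = 1 := by cases b <;> norm_num [sgn]

lemma sgn_not (b : Bool) : sgn (!b) = -sgn b := by cases b <;> simp [sgn]

lemma sum_fiber_mul_sum_fiber {ι κ R : Type*} [Fintype ι] [Fintype κ] [DecidableEq κ]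
    [CommSemiring R] (f : ι → κ) (a b : ι → R) :
    ∑ k, (∑ i with f i = k, a i) * (∑ j with f j = k, b j) =
      ∑ i, ∑ j, if f i = f j then a i * b j else 0 := by
  calc ∑ k, (∑ i with f i = k, a i) * (∑ j with f j = k, b j)
      = ∑ k, ∑ i with f i = k, a i * ∑ j with f j = f i, b j := by
        refine sum_congr rfl fun k _ => ?_
        rw [sum_mul]
        exact sum_congr rfl fun i hi => by rw [(mem_filter.1 hi).2]
    _ = ∑ i, a i * ∑ j with f j = f i, b j := sum_fiberwise _ f _
    _ = ∑ i, ∑ j, if f i = f j then a i * b j else 0 := by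
        refine sum_congr rfl fun i _ => ?_
        rw [sum_filter, mul_sum]
        exact sum_congr rfl fun j _ => by rw [mul_ite, mul_zero]; exact if_congr eq_comm rfl rfl

section SignCorrelation

variable {ι : Type*} [Fintype ι] [DecidableEq ι]

lemma sum_sgn_mul_sgn_of_ne {i j : ι} (hij : i ≠ j) :
    ∑ ξ : ι → Bool, sgn (ξ i) * sgn (ξ j) = 0 := by
  have flip_i : Function.Involutive fun ξ : ι → Bool => Function.update ξ i (!ξ i) := by
    intro ξ
    simp
  have := Fintype.sum_equiv flip_i.toPerm (fun ξ : ι → Bool => sgn (ξ i) * sgn (ξ j))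
    (fun ξ => -(sgn (ξ i) * sgn (ξ j))) fun ξ => by
      simp [Function.update_of_ne hij.symm, sgn_not]
  rw [sum_neg_distrib] at this
  linarith

lemma sum_sgn_mul_sgn (i j : ι) :
    ∑ ξ : ι → Bool, sgn (ξ i) * sgn (ξ j) = if i = j then 2 ^ Fintype.card ι else 0 := by
  split_ifs with hij
  · simp [hij, sgn_mul_self]
  · exact sum_sgn_mul_sgn_of_ne hij

end SignCorrelation

lemma hip_eq_sum {d m : ℕ} (h : Fin d → Fin m) (ξ : Fin d → Bool) (x x' : Fin d → ℝ) :
    hip h ξ x x' = ∑ i, ∑ j,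
      (if h i = h j then x i * x' j else 0) * (sgn (ξ i) * sgn (ξ j)) := by
  rw [hip, sum_fiber_mul_sum_fiber]
  simp_rw [ite_mul, zero_mul]
  congr! 3 with i _ j _
  ring

lemma sum_hip_over_signs {d m : ℕ} (h : Fin d → Fin m) (x x' : Fin d → ℝ) :
    ∑ ξ : Fin d → Bool, hip h ξ x x' = 2 ^ d * ∑ i, x i * x' i := by
  calc ∑ ξ : Fin d → Bool, hip h ξ x x'
      = ∑ i, ∑ j, (if h i = h j then x i * x' j else 0) *
          ∑ ξ : Fin d → Bool, sgn (ξ i) * sgn (ξ j) := by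
        simp_rw [hip_eq_sum, mul_sum]
        rw [sum_comm]
        exact sum_congr rfl fun i _ => sum_comm
    _ = ∑ i, x i * x' i * 2 ^ d := by
        simp_rw [sum_sgn_mul_sgn, Fintype.card_fin, mul_ite, mul_zero, sum_ite_eq, mem_univ,
          if_true]
    _ = 2 ^ d * ∑ i, x i * x' i := by rw [mul_sum]; simp_rw [mul_comm]

/-- The hashed inner product is an unbiased estimator of the inner product. -/
theorem hash_kernel_unbiased (d m : ℕ) (hm : 0 < m) (x x' : Fin d → ℝ) :
    hashExp d m (fun h ξ => hip h ξ x x') = ∑ i : Fin d, x i * x' i := by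
  have hm' : (m : ℝ) ≠ 0 := by exact_mod_cast hm.ne'
  calc hashExp d m (fun h ξ => hip h ξ x x')
      = (m : ℝ) ^ d * (2 ^ d * ∑ i, x i * x' i) / ((m : ℝ) ^ d * 2 ^ d) := by
        simp [hashExp, sum_hip_over_signs]
    _ = ∑ i, x i * x' i := by field_simp
end

section
/- (Weighted balls-into-bins, fixed-bin step) Let x ∈ R^d with ‖x‖₂ = 1 and ‖x‖_∞ ≤ η where η = 1/(2√(m log(m/δ))), and let h : Fin d → Fin m be i.i.d. uniform. For any fixed bucket i, Pr[ ∑_{j : h(j)=i} x_j² > 2/m ] ≤ δ/m, assuming 0 < δ < m. -/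
/-!
Chernoff bound. With `L = log (m / δ)` and `λ = 2 m L`, the number of hash functions whose bucket
`i` exceeds `2 / m` is at most `e^{-2λ/m} ∑_h e^{λ S_h}`. The exponential sum factorises over the
balls into `∏_j (m - 1 + e^{λ x_j²})`, and since `λ x_j² ≤ 1/2` by the sup-norm bound, each factor is
at most `m · exp (3 λ x_j² / (2m))`. With `∑ x_j² = 1` the probability is at most
`e^{-4L} e^{3L} = δ / m`.
-/

open Finset
open scoped Classical

/-- Probability of an event over a uniformly random hash function `h : Fin d → Fin m`. -/
noncomputable def hPr (d m : ℕ) (P : (Fin d → Fin m) → Prop) : ℝ :=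
  ((Finset.univ.filter (fun h : Fin d → Fin m => P h)).card : ℝ) / ((m : ℝ) ^ d)

open Real

theorem exp_sub_one_le_three_halves_mul {u : ℝ} (hu₀ : 0 ≤ u) (hu : u ≤ 1 / 2) :
    exp u - 1 ≤ 3 / 2 * u := by
  have h := abs_le.1 (abs_exp_sub_one_sub_id_le (x := u) (by rw [abs_of_nonneg hu₀]; linarith))
  nlinarith [h.2]

theorem add_le_mul_exp_div {m : ℝ} (hm : 0 < m) (y : ℝ) : m + y ≤ m * exp (y / m) := by
  have := mul_le_mul_of_nonneg_left (add_one_le_exp (y / m)) hm.le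
  rwa [mul_add, mul_div_cancel₀ _ hm.ne', mul_one, add_comm y] at this

theorem two_mul_mul_sq_le_half {a y : ℝ} (ha : 0 < a) (hy : |y| ≤ 1 / (2 * sqrt a)) :
    2 * a * y ^ 2 ≤ 1 / 2 :=
  calc 2 * a * y ^ 2 = 2 * a * |y| ^ 2 := by rw [sq_abs]
    _ ≤ 2 * a * (1 / (2 * sqrt a)) ^ 2 := by gcongr
    _ = 1 / 2 := by rw [div_pow, mul_pow, sq_sqrt ha.le]; field_simp

theorem hPr_lt_le_exp_mul_sum_exp {d m : ℕ} (f : (Fin d → Fin m) → ℝ) (t : ℝ) {l : ℝ}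
    (hl : 0 ≤ l) :
    hPr d m (fun h => t < f h) ≤ exp (-(l * t)) * (∑ h, exp (l * f h)) / (m : ℝ) ^ d := by
  unfold hPr
  gcongr ?_ / _
  rw [card_filter, Nat.cast_sum, mul_sum]
  refine sum_le_sum fun h _ => ?_
  rw [← exp_add]
  split_ifs with ht
  · exact_mod_cast one_le_exp (by nlinarith)
  · exact_mod_cast (exp_pos _).le

section Buckets

variable {ι κ : Type*} [Fintype ι] [DecidableEq ι] [Fintype κ] [DecidableEq κ]

theorem sum_exp_sum_filter_eq_prod (w : ι → ℝ) (i : κ) :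
    ∑ h : ι → κ, exp (∑ j with h j = i, w j)
      = ∏ j, ((Fintype.card κ : ℝ) - 1 + exp (w j)) := by
  have hsplit : ∀ j, ∑ v : κ, exp (if v = i then w j else 0)
      = (Fintype.card κ : ℝ) - 1 + exp (w j) := by
    intro j
    have hi : 1 ≤ Fintype.card κ := Fintype.card_pos_iff.2 ⟨i⟩
    have hrest : ∀ v ∈ ({i}ᶜ : Finset κ), exp (if v = i then w j else 0) = 1 := fun v hv => by
      rw [if_neg (by simpa using hv), exp_zero]
    rw [Fintype.sum_eq_add_sum_compl i, if_pos rfl, sum_congr rfl hrest, sum_const,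
      card_compl, card_singleton, nsmul_one, Nat.cast_sub hi, Nat.cast_one]
    ring
  simp_rw [sum_filter, exp_sum, ← hsplit]
  rw [Fintype.prod_sum]

theorem sum_exp_sum_filter_le {w : ι → ℝ} (hw₀ : ∀ j, 0 ≤ w j)
    (hw : ∀ j, w j ≤ 1 / 2) (i : κ) :
    ∑ h : ι → κ, exp (∑ j with h j = i, w j)
      ≤ (Fintype.card κ : ℝ) ^ Fintype.card ι
        * exp (3 / 2 * (∑ j, w j) / Fintype.card κ) := by
  have hκ : (0 : ℝ) < Fintype.card κ := by exact_mod_cast Fintype.card_pos_iff.2 ⟨i⟩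
  rw [sum_exp_sum_filter_eq_prod]
  calc ∏ j, ((Fintype.card κ : ℝ) - 1 + exp (w j))
      ≤ ∏ j, ((Fintype.card κ : ℝ) * exp ((exp (w j) - 1) / Fintype.card κ)) := by
        refine prod_le_prod (fun j _ => ?_) (fun j _ => ?_)
        · linarith [one_le_exp (hw₀ j)]
        · linarith [add_le_mul_exp_div hκ (exp (w j) - 1)]
    _ ≤ ∏ j, ((Fintype.card κ : ℝ) * exp (3 / 2 * w j / Fintype.card κ)) := by
        gcongr with j
        exact exp_sub_one_le_three_halves_mul (hw₀ j) (hw j)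
    _ = _ := by
        rw [prod_mul_distrib, ← exp_sum, prod_const, card_univ,
          ← sum_div, ← mul_sum]

end Buckets

theorem balls_bins_fixed_bin_general (d m : ℕ) (δ : ℝ) (hδ : 0 < δ)
    (hδm : δ < m) (x : Fin d → ℝ) (hx : ∑ j : Fin d, x j ^ 2 = 1)
    (hinf : ∀ j : Fin d, |x j| ≤ 1 / (2 * Real.sqrt (m * Real.log (m / δ))))
    (i : Fin m) :
    hPr d m (fun h => (2 : ℝ) / m <
      ∑ j ∈ Finset.univ.filter (fun j => h j = i), x j ^ 2) ≤ δ / m := by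
  have hm : (0 : ℝ) < m := by exact_mod_cast i.pos
  set L := log (m / δ)
  have hL : 0 < L := log_pos ((one_lt_div hδ).2 hδm)
  set l := 2 * (m * L)
  have hw : ∀ j, l * x j ^ 2 ≤ 1 / 2 := fun j => two_mul_mul_sq_le_half (by positivity) (hinf j)
  have hmgf : ∑ h : Fin d → Fin m, exp (l * ∑ j with h j = i, x j ^ 2)
      ≤ m ^ d * exp (3 * L) := by
    simp_rw [mul_sum]
    calc _ ≤ _ := sum_exp_sum_filter_le (fun j => by positivity) hw i
      _ = (m : ℝ) ^ d * exp (3 * L) := by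
        rw [← mul_sum, hx, mul_one, Fintype.card_fin, Fintype.card_fin]
        congr 2
        field_simp [l]
        ring
  calc _ ≤ exp (-(l * (2 / m))) * (∑ h : Fin d → Fin m, exp (l * ∑ j with h j = i, x j ^ 2))
        / m ^ d := hPr_lt_le_exp_mul_sum_exp _ _ (by positivity)
    _ ≤ exp (-(l * (2 / m))) * (m ^ d * exp (3 * L)) / m ^ d := by gcongr
    _ = exp (-(l * (2 / m)) + 3 * L) := by rw [exp_add]; field_simp
    _ = exp (-L) := by congr 1; field_simp [l]; ring
    _ = δ / m := by rw [exp_neg, exp_log (by positivity), inv_div]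

/-- Weighted balls-into-bins, fixed-bin step: if `‖x‖₂ = 1` and
`‖x‖_∞ ≤ 1/(2√(m log(m/δ)))`, then for any fixed bucket `i`,
`Pr[∑_{j : h(j)=i} x_j² > 2/m] ≤ δ/m`. -/
theorem balls_bins_fixed_bin (d m : ℕ) (hm : 0 < m) (δ : ℝ) (hδ : 0 < δ)
    (hδm : δ < m) (x : Fin d → ℝ) (hx : ∑ j : Fin d, x j ^ 2 = 1)
    (hinf : ∀ j : Fin d, |x j| ≤ 1 / (2 * Real.sqrt (m * Real.log (m / δ))))
    (i : Fin m) :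
    hPr d m (fun h => (2 : ℝ) / m <
      ∑ j ∈ Finset.univ.filter (fun j => h j = i), x j ^ 2) ≤ δ / m :=
  balls_bins_fixed_bin_general d m δ hδ hδm x hx hinf i
end

section
/- (Weighted balls-into-bins) Under the hypotheses of the fixed-bin step, with probability at least 1 − δ over the random hash h, the maximal bucket weight σ*² = max_{i ∈ Fin m} ∑_{j : h(j)=i} x_j² satisfies σ*² ≤ 2/m. -/
/-!
Chernoff bound for a single bucket `i`, then a union bound over the `m` buckets. The weight of
bucket `i` is a sum of independent terms `x_j² · [h j = i]`, so its moment generating function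
factors as `∏ⱼ (1 + (exp (t x_j²) - 1) / m)`. Taking `t = 4 m L log 2` with
`L = log (m / δ)`, the sup-norm bound gives `t x_j² ≤ log 2`, where convexity of `exp` yields
`exp (t x_j²) - 1 ≤ 4 m L x_j²`; hence the generating function is at most `exp (4 L)`, and
Markov's inequality at level `2 / m` gives the tail bound
`exp (4 L - 8 L log 2) ≤ exp (-L) = δ / m`.
-/

open Finset
open scoped Classical

open Real

section hPr

variable {d m : ℕ}

lemma hPr_not_eq_one_sub (hm : 0 < m) (P : (Fin d → Fin m) → Prop) :
    hPr d m (fun h => ¬ P h) = 1 - hPr d m P := by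
  have hcard := card_filter_add_card_filter_not (s := (univ : Finset (Fin d → Fin m))) P
  rw [card_univ, Fintype.card_fun, Fintype.card_fin, Fintype.card_fin] at hcard
  have hpow : (m : ℝ) ^ d ≠ 0 := by positivity
  rw [hPr, hPr, eq_sub_iff_add_eq, ← add_div, div_eq_one_iff_eq hpow, add_comm]
  convert congrArg (Nat.cast (R := ℝ)) hcard using 1
  · push_cast
    congr!
  · push_cast; rfl

lemma hPr_exists_le_sum {ι : Type*} [Fintype ι] (P : ι → (Fin d → Fin m) → Prop) :
    hPr d m (fun h => ∃ i, P i h) ≤ ∑ i, hPr d m (P i) := by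
  simp only [hPr, ← sum_div]
  gcongr
  have hunion :
      univ.filter (fun h => ∃ i, P i h) = univ.biUnion (fun i => univ.filter (P i)) := by
    ext h; simp
  rw [hunion]
  exact_mod_cast card_biUnion_le

lemma one_sub_sum_le_hPr_forall {ι : Type*} [Fintype ι] (hm : 0 < m)
    (P : ι → (Fin d → Fin m) → Prop) :
    1 - ∑ i, hPr d m (fun h => ¬ P i h) ≤ hPr d m (fun h => ∀ i, P i h) := by
  have hunion := hPr_exists_le_sum (d := d) (fun i h => ¬ P i h)
  have hcompl := hPr_not_eq_one_sub hm (fun h => ∀ i, P i h)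
  simp only [not_forall] at hcompl
  linarith

lemma hPr_lt_le_sum_exp (f : (Fin d → Fin m) → ℝ) (c : ℝ) {t : ℝ} (ht : 0 ≤ t) :
    hPr d m (fun h => c < f h) ≤ (∑ h, exp (t * (f h - c))) / (m : ℝ) ^ d := by
  rw [hPr]
  gcongr
  calc ((univ.filter (fun h => c < f h)).card : ℝ)
      = ∑ h ∈ univ.filter (fun h => c < f h), (1 : ℝ) := by simp
    _ ≤ ∑ h ∈ univ.filter (fun h => c < f h), exp (t * (f h - c)) := by
      refine sum_le_sum fun h hh => one_le_exp (mul_nonneg ht ?_)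
      linarith [(mem_filter.mp hh).2]
    _ ≤ ∑ h, exp (t * (f h - c)) :=
      sum_le_sum_of_subset_of_nonneg (subset_univ _) fun _ _ _ => (exp_pos _).le

end hPr

def bucketWeight {d m : ℕ} (w : Fin d → ℝ) (h : Fin d → Fin m) (i : Fin m) : ℝ :=
  ∑ j ∈ univ.filter (fun j => h j = i), w j

/-- Ball `j` contributes `exp (t * w j)` for the one value of `h j` that hits bucket `i` and `1`
for each of the other `m - 1`. -/
lemma sum_exp_mul_bucketWeight {d m : ℕ} (w : Fin d → ℝ) (i : Fin m) (t : ℝ) :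
    ∑ h : Fin d → Fin m, exp (t * bucketWeight w h i) =
      ∏ j, ((m : ℝ) - 1 + exp (t * w j)) := by
  have hfactor : ∀ h : Fin d → Fin m,
      exp (t * bucketWeight w h i) = ∏ j, exp (if h j = i then t * w j else 0) := by
    intro h
    rw [← exp_sum, bucketWeight, sum_filter, mul_sum]
    congr 1
    exact sum_congr rfl fun j _ => by split_ifs <;> simp
  simp_rw [hfactor]
  rw [← Fintype.prod_sum (fun j v => exp (if v = i then t * w j else 0))]
  refine prod_congr rfl fun j _ => ?_
  rw [← add_sum_erase _ _ (mem_univ i), if_pos rfl]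
  have hrest : ∀ v ∈ univ.erase i, exp (if v = i then t * w j else 0) = 1 := fun v hv => by
    rw [if_neg (ne_of_mem_erase hv), exp_zero]
  rw [sum_congr rfl hrest, sum_const, card_erase_of_mem (mem_univ i), card_univ, Fintype.card_fin,
    nsmul_one, Nat.cast_sub i.pos]
  push_cast
  ring

/-- The chord of the convex function `exp` on `[0, u]` lies above its graph. -/
lemma exp_mul_le_one_add_mul_exp_sub_one {s : ℝ} (u : ℝ) (hs0 : 0 ≤ s) (hs1 : s ≤ 1) :
    exp (s * u) ≤ 1 + s * (exp u - 1) := by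
  have hchord := convexOn_exp.2 (Set.mem_univ 0) (Set.mem_univ u) (sub_nonneg.2 hs1) hs0
    (sub_add_cancel 1 s)
  simp only [smul_eq_mul, mul_zero, zero_add, exp_zero, mul_one] at hchord
  linarith

lemma prod_sub_one_add_exp_le {ι : Type*} (s : Finset ι) (a : ι → ℝ) {M : ℝ} (hM : 0 < M)
    (ha0 : ∀ j ∈ s, 0 ≤ a j) (ha1 : ∀ j ∈ s, a j ≤ 1) :
    ∏ j ∈ s, (M - 1 + exp (a j * log 2)) ≤ M ^ s.card * exp ((∑ j ∈ s, a j) / M) := by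
  have hfactor : ∀ j ∈ s, M - 1 + exp (a j * log 2) ≤ M * exp (a j / M) := fun j hj =>
    calc M - 1 + exp (a j * log 2) ≤ M - 1 + (1 + a j * (exp (log 2) - 1)) := by
          gcongr; exact exp_mul_le_one_add_mul_exp_sub_one _ (ha0 j hj) (ha1 j hj)
      _ = M * (a j / M + 1) := by rw [exp_log two_pos]; field_simp; ring
      _ ≤ M * exp (a j / M) := by gcongr; exact add_one_le_exp _
  calc ∏ j ∈ s, (M - 1 + exp (a j * log 2)) ≤ ∏ j ∈ s, M * exp (a j / M) :=
        prod_le_prod (fun j hj => by linarith [ha0 j hj, one_le_exp (mul_nonneg (ha0 j hj)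
          (log_nonneg one_le_two))]) hfactor
    _ = M ^ s.card * exp ((∑ j ∈ s, a j) / M) := by
        rw [prod_mul_distrib, prod_const, ← exp_sum, sum_div]

lemma hPr_two_div_lt_bucketWeight_le {d m : ℕ} {L : ℝ} (hL : 0 < L) (w : Fin d → ℝ)
    (hw0 : ∀ j, 0 ≤ w j) (hw : ∑ j, w j = 1) (hwmax : ∀ j, w j ≤ 1 / (4 * m * L))
    (i : Fin m) :
    hPr d m (fun h => 2 / m < bucketWeight w h i) ≤ exp (-L) := by
  have hm : (0 : ℝ) < m := by exact_mod_cast i.pos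
  set a : Fin d → ℝ := fun j => 4 * m * L * w j
  have ha0 : ∀ j ∈ univ, 0 ≤ a j := fun j _ => by have := hw0 j; positivity
  have ha1 : ∀ j ∈ univ, a j ≤ 1 := fun j _ => by
    have := hwmax j; rw [le_div_iff₀ (by positivity)] at this; linarith
  have hsum_a : (∑ j, a j) / m = 4 * L := by
    rw [← mul_sum, hw]; field_simp
  set t := 4 * m * L * log 2
  have ht : 0 ≤ t := by have := log_nonneg one_le_two; positivity
  have hmgf : ∑ h : Fin d → Fin m, exp (t * (bucketWeight w h i - 2 / m))
      = exp (-(t * (2 / m))) * ∏ j, ((m : ℝ) - 1 + exp (a j * log 2)) := by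
    simp_rw [mul_sub, sub_eq_add_neg, exp_add, ← sum_mul, ← sub_eq_add_neg,
      sum_exp_mul_bucketWeight, a, mul_comm]
    congr! 4; ring
  have hexponent : -(t * (2 / m)) + 4 * L ≤ -L := by
    have : t * (2 / m) = 8 * L * log 2 := by field_simp; ring
    nlinarith [log_two_gt_d9]
  calc hPr d m (fun h => 2 / m < bucketWeight w h i)
      ≤ (∑ h : Fin d → Fin m, exp (t * (bucketWeight w h i - 2 / m))) / (m : ℝ) ^ d :=
        hPr_lt_le_sum_exp _ _ ht
    _ ≤ exp (-(t * (2 / m))) * ((m : ℝ) ^ d * exp (4 * L)) / (m : ℝ) ^ d := by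
        rw [hmgf]
        gcongr
        simpa [hsum_a] using prod_sub_one_add_exp_le univ a hm ha0 ha1
    _ = exp (-(t * (2 / m)) + 4 * L) := by rw [exp_add]; field_simp
    _ ≤ exp (-L) := exp_le_exp.2 hexponent

/-- Weighted balls-into-bins: with probability at least `1 − δ`, every bucket
weight `∑_{j : h(j)=i} x_j²` is at most `2/m`. -/
theorem balls_bins (d m : ℕ) (hm : 0 < m) (δ : ℝ) (hδ : 0 < δ)
    (hδm : δ < m) (x : Fin d → ℝ) (hx : ∑ j : Fin d, x j ^ 2 = 1)
    (hinf : ∀ j : Fin d, |x j| ≤ 1 / (2 * Real.sqrt (m * Real.log (m / δ)))) :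
    1 - δ ≤ hPr d m (fun h => ∀ i : Fin m,
      ∑ j ∈ Finset.univ.filter (fun j => h j = i), x j ^ 2 ≤ (2 : ℝ) / m) := by
  have hm' : (0 : ℝ) < m := by exact_mod_cast hm
  set L := log (m / δ)
  have hL : 0 < L := log_pos (by rwa [one_lt_div hδ])
  have hwmax : ∀ j, x j ^ 2 ≤ 1 / (4 * m * L) := fun j =>
    calc x j ^ 2 = |x j| ^ 2 := (sq_abs _).symm
      _ ≤ (1 / (2 * √(m * L))) ^ 2 := by gcongr; exact hinf j
      _ = 1 / (4 * m * L) := by rw [div_pow, mul_pow, sq_sqrt (by positivity)]; ring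
  have hbucket := hPr_two_div_lt_bucketWeight_le hL (fun j => x j ^ 2) (fun j => sq_nonneg _) hx
    hwmax
  have hexp : exp (-L) = δ / m := by rw [exp_neg, exp_log (by positivity), inv_div]
  calc 1 - δ = 1 - ∑ _i : Fin m, δ / m := by
        rw [sum_const, card_univ, Fintype.card_fin, nsmul_eq_mul, mul_div_cancel₀ _ hm'.ne']
    _ ≤ 1 - ∑ i, hPr d m (fun h => ¬ bucketWeight (fun j => x j ^ 2) h i ≤ 2 / m) := by
        gcongr with i; simpa [not_le, hexp] using hbucket i
    _ ≤ _ := one_sub_sum_le_hPr_forall hm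
        (fun i h => bucketWeight (fun j => x j ^ 2) h i ≤ 2 / m)
end
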